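/- arXiv:2601.06353 — 2 statements merged into one kernel-verified Lean document; each statement's English description precedes it below -/
import Mathlib

section
/- Let n ≥ 2 and let H be a subgroup of ℤ^n that is invariant under the natural action of SL_n(ℤ) by matrix multiplication (i.e., g·h ∈ H for all g ∈ SL_n(ℤ), h ∈ H). Then H = d·ℤ^n for some integer d ≥ 0. -/
/-!
For `i ≠ j`, the transvection `1 + c • E_ij` moves `v` by `Pi.single i (c * v j)`, so an
`SL_n`-invariant subgroup `H` contains every such vector; when there are at least two indices,
a second transvection moves the entry to any position. Hence `H` contains `Pi.single k a` for
every `a` in the ideal `I` generated by the entries of its elements, and so `H = Iⁿ`. Over `ℤ`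
the ideal `I` is `(d)` with `d ≥ 0`.
-/

open Matrix

namespace Matrix.SpecialLinearGroup

variable {ι R : Type*} [Fintype ι] [DecidableEq ι] [CommRing R] {H : AddSubgroup (ι → R)}

theorem transvection_mulVec_sub_self {i j : ι} (hij : i ≠ j) (c : R) (v : ι → R) :
    (transvection hij c : Matrix ι ι R) *ᵥ v - v = Pi.single i (c * v j) := by
  rw [transvection_coe, add_mulVec, one_mulVec, single_mulVec, add_sub_cancel_left]
  rfl

theorem single_mul_apply_mem_of_ne
    (hH : ∀ g : SpecialLinearGroup ι R, ∀ v ∈ H, (g : Matrix ι ι R) *ᵥ v ∈ H)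
    {v : ι → R} (hv : v ∈ H) {i j : ι} (hij : i ≠ j) (c : R) :
    Pi.single i (c * v j) ∈ H := by
  rw [← transvection_mulVec_sub_self hij]
  exact H.sub_mem (hH (transvection hij c) v hv) hv

theorem single_mul_apply_mem [Nontrivial ι]
    (hH : ∀ g : SpecialLinearGroup ι R, ∀ v ∈ H, (g : Matrix ι ι R) *ᵥ v ∈ H)
    {v : ι → R} (hv : v ∈ H) (j k : ι) (c : R) :
    Pi.single k (c * v j) ∈ H := by
  obtain ⟨i, hij⟩ := exists_ne j
  have hi : Pi.single i (c * v j) ∈ H := single_mul_apply_mem_of_ne hH hv hij c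
  obtain rfl | hki := eq_or_ne k i
  · exact hi
  · simpa using single_mul_apply_mem_of_ne hH hi hki 1

theorem exists_ideal_mem_iff_forall_apply_mem [Nontrivial ι]
    (hH : ∀ g : SpecialLinearGroup ι R, ∀ v ∈ H, (g : Matrix ι ι R) *ᵥ v ∈ H) :
    ∃ I : Ideal R, ∀ v : ι → R, v ∈ H ↔ ∀ j, v j ∈ I := by
  set I : Ideal R := Ideal.span {a | ∃ w ∈ H, ∃ j, w j = a}
  have hsingle : ∀ a ∈ I, ∀ k, Pi.single k a ∈ H := by
    intro a ha k
    induction ha using Submodule.span_induction with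
    | mem a ha =>
      obtain ⟨w, hw, j, rfl⟩ := ha
      simpa using single_mul_apply_mem hH hw j k 1
    | zero => simp
    | add a b _ _ ha hb => simpa [Pi.single_add] using H.add_mem ha hb
    | smul c a _ ha => simpa using single_mul_apply_mem hH ha k k c
  refine ⟨I, fun v => ⟨fun hv j => Ideal.subset_span ⟨v, hv, j, rfl⟩, fun hv => ?_⟩⟩
  rw [← Finset.univ_sum_single v]
  exact H.sum_mem fun j _ => hsingle _ (hv j) j

end Matrix.SpecialLinearGroup

/-- Every `SL_n(ℤ)`-invariant subgroup of `ℤⁿ` (for the action by matrix multiplication)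
is of the form `d·ℤⁿ` for some integer `d ≥ 0`. -/
theorem invariant_subgroup_of_Zn_eq_dZn (n : ℕ) (hn : 2 ≤ n)
    (H : AddSubgroup (Fin n → ℤ))
    (hinv : ∀ g : Matrix.SpecialLinearGroup (Fin n) ℤ, ∀ v ∈ H, g.val.mulVec v ∈ H) :
    ∃ d : ℤ, 0 ≤ d ∧ ∀ v : Fin n → ℤ, v ∈ H ↔ ∃ w : Fin n → ℤ, v = d • w := by
  have : Nontrivial (Fin n) := Fin.nontrivial_iff_two_le.mpr hn
  obtain ⟨I, hI⟩ := SpecialLinearGroup.exists_ideal_mem_iff_forall_apply_mem hinv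
  obtain ⟨d, rfl⟩ := (IsPrincipalIdealRing.principal I).principal
  rw [Ideal.submodule_span_eq, ← Ideal.span_singleton_abs] at hI
  refine ⟨|d|, abs_nonneg d, fun v => ?_⟩
  simp only [hI, Ideal.mem_span_singleton]
  constructor
  · intro hdvd
    choose w hw using hdvd
    exact ⟨w, funext hw⟩
  · rintro ⟨w, rfl⟩ j
    exact dvd_mul_right _ _
end

section
/- Let n ≥ 2, let N be a normal subgroup of G_n = ℤ^n ⋊ SL_n(ℤ), and suppose N ∩ ℤ^n = {0} (where ℤ^n is identified with ℤ^n × {I_n}). Then N ⊆ ℤ^n, and hence N is trivial. -/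
open Matrix

/-- The linear automorphism group of `ℤⁿ` mapped to (multiplicative) automorphisms of
`Multiplicative ℤⁿ`. -/
def linToMulAut (n : ℕ) :
    ((Fin n → ℤ) ≃ₗ[ℤ] (Fin n → ℤ)) →* MulAut (Multiplicative (Fin n → ℤ)) where
  toFun e := AddEquiv.toMultiplicative e.toAddEquiv
  map_one' := rfl
  map_mul' _ _ := rfl

/-- The action of `SL_n(ℤ)` on `Multiplicative ℤⁿ` by matrix multiplication. -/
def slAction (n : ℕ) :
    Matrix.SpecialLinearGroup (Fin n) ℤ →* MulAut (Multiplicative (Fin n → ℤ)) :=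
  (linToMulAut n).comp Matrix.SpecialLinearGroup.toLin'

/-- The group `Gₙ = ℤⁿ ⋊ SL_n(ℤ)`. -/
abbrev Gn (n : ℕ) := SemidirectProduct (Multiplicative (Fin n → ℤ))
  (Matrix.SpecialLinearGroup (Fin n) ℤ) (slAction n)

/-- If `N` is a normal subgroup of `Gₙ = ℤⁿ ⋊ SL_n(ℤ)` with `N ∩ ℤⁿ = {0}`,
then `N ⊆ ℤⁿ`, and hence `N` is trivial. -/
theorem normal_subgroup_trivial_of_trivial_meet_Zn (n : ℕ) (hn : 2 ≤ n)
    (N : Subgroup (Gn n)) (hN : N.Normal)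
    (hmeet : ∀ x ∈ N, x.right = 1 → x = 1) :
    (∀ x ∈ N, x.right = 1) ∧ N = ⊥ := by
  have key : ∀ x ∈ N, x.right = 1 := by
    intro x hx
    have hv : ∀ v : Multiplicative (Fin n → ℤ), slAction n x.right v = v := by
      intro v
      have hc : (SemidirectProduct.inl v) * x * (SemidirectProduct.inl v)⁻¹ * x⁻¹ ∈ N :=
        N.mul_mem (hN.conj_mem x hx (SemidirectProduct.inl v)) (N.inv_mem hx)
      have hr : ((SemidirectProduct.inl v) * x * (SemidirectProduct.inl v)⁻¹ * x⁻¹).right = 1 := by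
        simp
      have h1 := hmeet _ hc hr
      have h2 : (SemidirectProduct.inl v) * x = x * (SemidirectProduct.inl v) := by
        have := congrArg (fun y => y * (x * SemidirectProduct.inl v)) h1
        simpa [mul_assoc] using this
      have h3 := congrArg SemidirectProduct.left h2
      simp [SemidirectProduct.mul_left] at h3
      have := mul_comm v x.left
      rw [this] at h3
      exact (mul_left_cancel h3).symm
    have hmat : (x.right : Matrix (Fin n) (Fin n) ℤ) = 1 := by
      ext i j
      have := hv (Multiplicative.ofAdd (Pi.single j 1))
      have h4 : (x.right : Matrix (Fin n) (Fin n) ℤ) *ᵥ (Pi.single j 1) = Pi.single j 1 := by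
        exact this
      have := congrFun h4 i
      simpa [Matrix.mulVec_single, Matrix.one_apply, Pi.single_apply, eq_comm] using this
    exact Subtype.ext hmat
  refine ⟨key, ?_⟩
  rw [Subgroup.eq_bot_iff_forall]
  exact fun x hx => hmeet x hx (key x hx)
end
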